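/- Let M be obtained from a connected binary matroid N by relaxing two disjoint circuit-hyperplanes X and Y with X ∪ Y = E(N). Then for every element e of E(M), both M\e and M/e are non-binary. -/

import Mathlib

set_option autoImplicit false

open Set

universe u v

namespace NearlyBinary

variable {α : Type u} {β : Type v}

/-- `C` is a circuit of `M`: a minimal dependent set. -/
def Circuit (M : Matroid α) (C : Set α) : Prop :=
  M.Dep C ∧ ∀ e ∈ C, M.Indep (C \ {e})

/-- `H` is a hyperplane of `M`: a maximal proper flat. -/
def Hyperplane (M : Matroid α) (H : Set α) : Prop :=
  M.IsFlat H ∧ H ≠ M.E ∧ ∀ F, M.IsFlat F → H ⊂ F → F = M.E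

/-- `H` is a circuit-hyperplane of `M`. -/
def CircuitHyperplane (M : Matroid α) (H : Set α) : Prop :=
  Circuit M H ∧ Hyperplane M H

/-- `M'` is the relaxation of `M` along `H` : same ground set, and the bases of `M'`
are the bases of `M` together with `H`. -/
def IsRelaxation (M : Matroid α) (H : Set α) (M' : Matroid α) : Prop :=
  M'.E = M.E ∧ ∀ B, M'.IsBase B ↔ (M.IsBase B ∨ B = H)

/-- Deletion of the set `D` from `M`. -/
def del (M : Matroid α) (D : Set α) : Matroid α := M.restrict (M.E \ D)

/-- Contraction of the set `C` in `M`. -/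
def con (M : Matroid α) (C : Set α) : Matroid α := ((M✶).restrict (M.E \ C))✶

/-- `N` is a minor of `M` (on the same type), obtained by a contraction and a deletion. -/
def IsMinorOf (N M : Matroid α) : Prop :=
  ∃ C D, C ⊆ M.E ∧ D ⊆ M.E ∧ Disjoint C D ∧ N = del (con M C) D

/-- `M` is binary: representable over `GF(2)`. -/
def IsBinary (M : Matroid α) : Prop :=
  ∃ (ι : Type u) (φ : α → ι → ZMod 2),
    ∀ I, I ⊆ M.E → (M.Indep I ↔ LinearIndependent (ZMod 2) (fun x : I => φ x.1))

def IsLoop (M : Matroid α) (e : α) : Prop := e ∈ M.E ∧ ¬ M.Indep {e}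

def IsColoop (M : Matroid α) (e : α) : Prop := e ∈ M.E ∧ ∀ B, M.IsBase B → e ∈ B

/-- `x` and `y` are parallel: distinct elements forming a two-element circuit. -/
def Parallel (M : Matroid α) (x y : α) : Prop := x ≠ y ∧ Circuit M {x, y}

/-- A separator of `M`: a set such that every circuit lies inside it or inside its complement. -/
def Separator (M : Matroid α) (S : Set α) : Prop :=
  S ⊆ M.E ∧ ∀ C, Circuit M C → C ⊆ S ∨ C ⊆ M.E \ S

/-- `M` is disconnected: its ground set is partitioned into two nonempty separators. -/
def Disconnected (M : Matroid α) : Prop :=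
  ∃ S, Separator M S ∧ S.Nonempty ∧ (M.E \ S).Nonempty

/-- `M` is connected (2-connected). -/
def Connected (M : Matroid α) : Prop := ¬ Disconnected M

/-- The rank (in `ℕ∞`) of a set `X` in `M`. -/
noncomputable def eRk (M : Matroid α) (X : Set α) : ℕ∞ :=
  ⨆ I ∈ {I | M.Indep I ∧ I ⊆ X}, I.encard

/-- `M` has a (Tutte) `k`-separation. -/
def HasSep (M : Matroid α) (k : ℕ) : Prop :=
  ∃ X, X ⊆ M.E ∧ (k : ℕ∞) ≤ X.encard ∧ (k : ℕ∞) ≤ (M.E \ X).encard ∧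
    eRk M X + eRk M (M.E \ X) ≤ eRk M M.E + ((k : ℕ∞) - 1)

/-- `M` is `n`-connected in the sense of Tutte. -/
def TutteConnected (n : ℕ) (M : Matroid α) : Prop :=
  ∀ k, 1 ≤ k → k < n → ¬ HasSep M k

/-- `M` is isomorphic to the uniform matroid `U_{r,m}`. -/
def IsUniform (M : Matroid α) (r m : ℕ) : Prop :=
  M.E.encard = m ∧ ∀ B, M.IsBase B ↔ (B ⊆ M.E ∧ B.encard = r)

/-- `M` is isomorphic to the direct sum `U_{n-1,n} ⊕ U_{1,k}`. -/
def IsUnifSumUnif (M : Matroid α) (n k : ℕ) : Prop :=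
  ∃ S P : Set α, Disjoint S P ∧ S ∪ P = M.E ∧ S.encard = n ∧ P.encard = k ∧
    ∀ B, M.IsBase B ↔ ∃ s ∈ S, ∃ p ∈ P, B = (S \ {s}) ∪ {p}

/-- `M` is the 2-sum of `M₁` and `M₂` with basepoint `p`, described by its circuits. -/
def IsTwoSum (M₁ M₂ : Matroid α) (p : α) (M : Matroid α) : Prop :=
  M₁.E ∩ M₂.E = {p} ∧
  ¬ IsLoop M₁ p ∧ ¬ IsColoop M₁ p ∧ ¬ IsLoop M₂ p ∧ ¬ IsColoop M₂ p ∧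
  M.E = (M₁.E ∪ M₂.E) \ {p} ∧
  ∀ C, Circuit M C ↔
    ((Circuit M₁ C ∧ p ∉ C) ∨ (Circuit M₂ C ∧ p ∉ C) ∨
      ∃ C₁ C₂, Circuit M₁ C₁ ∧ Circuit M₂ C₂ ∧ p ∈ C₁ ∧ p ∈ C₂ ∧
        C = (C₁ \ {p}) ∪ (C₂ \ {p}))

/-- `M` is isomorphic to `N`. -/
def Iso (M : Matroid β) (N : Matroid α) : Prop :=
  ∃ f : β → α, Set.BijOn f M.E N.E ∧ ∀ I, I ⊆ M.E → (M.Indep I ↔ N.Indep (f '' I))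

/-- `M` is the vector matroid, with ground set `G`, of the vectors `φ` over `GF(2)`. -/
def IsVecMatroid {ι : Type v} (M : Matroid α) (φ : α → ι → ZMod 2) (G : Set α) : Prop :=
  M.E = G ∧ ∀ I, I ⊆ G → (M.Indep I ↔ LinearIndependent (ZMod 2) (fun x : I => φ x.1))


section Machinery

/-- convenience: a representation property -/
def Rep {ι : Type v} (M : Matroid α) (φ : α → ι → ZMod 2) : Prop :=
  ∀ I, I ⊆ M.E → (M.Indep I ↔ LinearIndependent (ZMod 2) (fun x : I => φ x.1))

variable {ι : Type v} {M : Matroid α} {φ : α → ι → ZMod 2}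

lemma zmod2_vec_add_self (v : ι → ZMod 2) : v + v = 0 := by
  funext i
  exact CharTwo.add_self_eq_zero (v i)

lemma zsum_symmDiff [DecidableEq α] (f : α → ι → ZMod 2) (s t : Finset α) :
    ∑ x ∈ symmDiff s t, f x = ∑ x ∈ s, f x + ∑ x ∈ t, f x := by
  have hdisj : Disjoint (s \ t) (t \ s) := disjoint_sdiff_sdiff
  have h1 : symmDiff s t = (s \ t) ∪ (t \ s) := by
    rw [symmDiff_def, Finset.sup_eq_union]
  rw [h1, Finset.sum_union hdisj]
  have hs : ∑ x ∈ s, f x = ∑ x ∈ s ∩ t, f x + ∑ x ∈ s \ t, f x :=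
    (Finset.sum_inter_add_sum_sdiff s t f).symm
  have ht : ∑ x ∈ t, f x = ∑ x ∈ t ∩ s, f x + ∑ x ∈ t \ s, f x :=
    (Finset.sum_inter_add_sum_sdiff t s f).symm
  rw [hs, ht, Finset.inter_comm t s]
  abel_nf
  rw [show (2 : ℤ) • ∑ x ∈ s ∩ t, f x = (∑ x ∈ s ∩ t, f x) + (∑ x ∈ s ∩ t, f x) by
    rw [two_zsmul], zmod2_vec_add_self]
  abel

lemma Rep.zsum_dep (hφ : Rep M φ) {S : Finset α} (hS : ↑S ⊆ M.E) (hne : S.Nonempty)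
    (h0 : ∑ x ∈ S, φ x = 0) : M.Dep ↑S := by
  rw [Matroid.dep_iff]
  refine ⟨fun hI => ?_, hS⟩
  have hli := (hφ _ hS).1 hI
  have : ∀ g : (↑S : Set α) → ZMod 2, ∑ i, g i • φ i = 0 → ∀ i, g i = 0 :=
    Fintype.linearIndependent_iff.1 hli
  have h1 : ∑ i : (↑S : Set α), (1 : ZMod 2) • φ i = 0 := by
    simp only [one_smul]
    rw [show ∑ i : (↑S : Set α), φ i = ∑ x ∈ S, φ x from Finset.sum_finset_coe _ _]
    exact h0
  obtain ⟨x, hx⟩ := hne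
  have := this (fun _ => 1) h1 ⟨x, by simpa using hx⟩
  simp at this

lemma Rep.dep_zsum (hφ : Rep M φ) {D : Set α} (hD : M.Dep D) :
    ∃ S : Finset α, ↑S ⊆ D ∧ S.Nonempty ∧ ∑ x ∈ S, φ x = 0 := by
  classical
  have hDE : D ⊆ M.E := hD.subset_ground
  have hnl : ¬ LinearIndependent (ZMod 2) (fun x : D => φ x.1) := by
    intro h; exact hD.not_indep ((hφ _ hDE).2 h)
  obtain ⟨s, g, hsum, i₀, hi₀s, hi₀⟩ := not_linearIndependent_iff.1 hnl
  set s' : Finset D := s.filter (fun i => g i ≠ 0) with hs'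
  have hone : ∀ i ∈ s', g i = 1 := by
    intro i hi
    have : g i ≠ 0 := (Finset.mem_filter.1 hi).2
    revert this; generalize g i = a; revert a; decide
  refine ⟨s'.image Subtype.val, ?_, ?_, ?_⟩
  · intro x hx
    simp only [Finset.coe_image, mem_image] at hx
    obtain ⟨⟨y, hy⟩, _, rfl⟩ := hx
    exact hy
  · exact ⟨i₀, Finset.mem_image.2 ⟨i₀, Finset.mem_filter.2 ⟨hi₀s, hi₀⟩, rfl⟩⟩
  · rw [Finset.sum_image (fun a _ b _ h => Subtype.val_injective h)]
    have : ∑ i ∈ s', φ i = ∑ i ∈ s', g i • φ i := by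
      apply Finset.sum_congr rfl
      intro i hi; rw [hone i hi, one_smul]
    rw [this]
    rw [← hsum]
    refine Finset.sum_filter_of_ne ?_
    intro i hi h hgi
    apply h; rw [hgi, zero_smul]


lemma circuit_aux (M : Matroid α) : ∀ n (S : Finset α), S.card ≤ n → M.Dep ↑S →
    ∃ C, C ⊆ (S : Set α) ∧ Circuit M C := by
  intro n
  induction n with
  | zero =>
    intro S hcard hdep
    obtain rfl : S = ∅ := Finset.card_eq_zero.1 (le_antisymm hcard (Nat.zero_le _))
    simp only [Finset.coe_empty] at hdep
    exact absurd hdep.nonempty (by simp)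
  | succ n ih =>
    intro S hcard hdep
    by_cases h : ∀ e ∈ (S : Set α), M.Indep ((S : Set α) \ {e})
    · exact ⟨S, Subset.rfl, hdep, h⟩
    · classical
      push_neg at h
      obtain ⟨e, heS, hne⟩ := h
      have hdep' : M.Dep ((S : Set α) \ {e}) :=
        ⟨hne, diff_subset.trans hdep.subset_ground⟩
      rw [show (S : Set α) \ {e} = ↑(S.erase e) from (Finset.coe_erase e S).symm] at hdep'
      obtain ⟨C, hCsub, hC⟩ := ih (S.erase e)
        (by
          have h1 := Finset.card_erase_of_mem (Finset.mem_coe.1 heS)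
          omega) hdep'
      exact ⟨C, hCsub.trans (by simp [Finset.erase_subset]), hC⟩

lemma exists_circuit_of_dep_finite {D : Set α} (hD : M.Dep D) (hfin : D.Finite) :
    ∃ C, C ⊆ D ∧ Circuit M C := by
  obtain ⟨S, hS⟩ : ∃ S : Finset α, (S : Set α) = D := ⟨hfin.toFinset, hfin.coe_toFinset⟩
  subst hS
  exact circuit_aux M S.card S le_rfl hD

lemma Rep.circuit_finset (hφ : Rep M φ) {C : Set α} (hC : Circuit M C) :
    ∃ S : Finset α, (S : Set α) = C ∧ ∑ x ∈ S, φ x = 0 := by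
  obtain ⟨S, hSsub, hSne, hSsum⟩ := hφ.dep_zsum hC.1
  refine ⟨S, ?_, hSsum⟩
  refine Subset.antisymm hSsub ?_
  by_contra hsup
  obtain ⟨c, hcC, hcS⟩ : ∃ c ∈ C, c ∉ (S : Set α) := by
    rcases not_subset.1 hsup with ⟨c, h1, h2⟩; exact ⟨c, h1, h2⟩
  have hsub : (S : Set α) ⊆ C \ {c} := fun x hx => ⟨hSsub hx, fun h => hcS (h ▸ hx)⟩
  exact (hφ.zsum_dep (hSsub.trans hC.1.subset_ground) hSne hSsum).not_indep
    ((hC.2 c hcC).subset hsub)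

lemma circuit_finite (hφ : Rep M φ) {C : Set α} (hC : Circuit M C) : C.Finite := by
  obtain ⟨S, hS, -⟩ := hφ.circuit_finset hC
  rw [← hS]; exact S.finite_toSet

lemma Rep.exists_circuit_zsum_mem (hφ : Rep M φ) :
    ∀ n (S : Finset α), S.card ≤ n → ↑S ⊆ M.E → (∑ x ∈ S, φ x = 0) →
      ∀ g ∈ S, ∃ C, Circuit M C ∧ C ⊆ (S : Set α) ∧ g ∈ C := by
  intro n
  induction n with
  | zero =>
    intro S hcard _ _ g hg
    obtain rfl : S = ∅ := Finset.card_eq_zero.1 (le_antisymm hcard (Nat.zero_le _))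
    simp at hg
  | succ n ih =>
    intro S hcard hSE hsum g hg
    classical
    have hdep : M.Dep ↑S := hφ.zsum_dep hSE ⟨g, hg⟩ hsum
    obtain ⟨C₀, hC₀sub, hC₀⟩ := circuit_aux M S.card S le_rfl hdep
    by_cases hgC₀ : g ∈ C₀
    · exact ⟨C₀, hC₀, hC₀sub, hgC₀⟩
    obtain ⟨T₀, hT₀eq, hT₀sum⟩ := hφ.circuit_finset hC₀
    have hT₀S : T₀ ⊆ S := Finset.coe_subset.1 (hT₀eq ▸ hC₀sub)
    have hT₀ne : T₀.Nonempty := by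
      obtain ⟨x, hx⟩ := hC₀.1.nonempty
      exact ⟨x, by rw [← Finset.mem_coe, hT₀eq]; exact hx⟩
    have hS'card : (S \ T₀).card ≤ n := by
      have := Finset.card_lt_card (Finset.sdiff_ssubset hT₀S hT₀ne)
      omega
    have hS'sum : ∑ x ∈ S \ T₀, φ x = 0 := by
      rw [Finset.sum_sdiff_eq_sub hT₀S, hsum, hT₀sum, sub_zero]
    have hgS' : g ∈ S \ T₀ := Finset.mem_sdiff.2 ⟨hg, fun h => hgC₀ (by
      rw [← hT₀eq]; exact Finset.mem_coe.2 h)⟩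
    obtain ⟨C, hC, hCsub, hgC⟩ := ih (S \ T₀) hS'card
      ((Finset.coe_subset.2 (Finset.sdiff_subset)).trans hSE) hS'sum g hgS'
    exact ⟨C, hC, hCsub.trans (Finset.coe_subset.2 Finset.sdiff_subset), hgC⟩

lemma flat_closure (M : Matroid α) (X : Set α) : M.IsFlat (M.closure X) := by
  rw [Matroid.closure_def, sInter_eq_iInter]
  have hne : Nonempty {F : Set α // F ∈ {F | M.IsFlat F ∧ X ∩ M.E ⊆ F}} :=
    ⟨⟨M.E, M.ground_isFlat, inter_subset_right⟩⟩
  exact Matroid.IsFlat.iInter (fun F => F.2.1)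


lemma Rep.even_circuit_hyperplane (hφ : Rep M φ) {C Hp : Set α}
    (hC : Circuit M C) (hH : Hyperplane M Hp) : Even ((C \ Hp).ncard) := by
  classical
  obtain ⟨I, hI⟩ := M.exists_isBasis Hp hH.1.subset_ground
  have hIind : M.Indep I := hI.indep
  have hIHp : I ⊆ Hp := hI.subset
  have hHpE : Hp ⊆ M.E := hH.1.subset_ground
  have hclHp : M.closure Hp = Hp := hH.1.closure
  have hclI : M.closure I = Hp := by rw [hI.closure_eq_closure, hclHp]
  -- insert of an element outside Hp into I is independent
  have hins : ∀ c ∈ M.E \ Hp, M.Indep (insert c I) := by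
    intro c hc
    by_contra hdep
    have hd : M.Dep (insert c I) := ⟨hdep, insert_subset hc.1 (hIHp.trans hHpE)⟩
    have := hIind.insert_dep_iff.1 hd
    rw [hclI] at this
    exact hc.2 this.1
  -- (β) elements of Hp are spanned by I
  have hbeta : ∀ h ∈ Hp, h ∉ I → ∃ T : Finset α, h ∈ T ∧ ↑T ⊆ insert h I ∧
      ∑ x ∈ T, φ x = 0 := by
    intro h hh hhI
    have hmem : h ∈ M.closure I := by rw [hclI]; exact hh
    have hdep : M.Dep (insert h I) := hIind.insert_dep_iff.2 ⟨hmem, hhI⟩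
    obtain ⟨T, hTsub, hTne, hTsum⟩ := hφ.dep_zsum hdep
    refine ⟨T, ?_, hTsub, hTsum⟩
    by_contra hhT
    have hTI : (T : Set α) ⊆ I := by
      intro x hx
      rcases hTsub hx with h1 | h2
      · exact absurd (h1 ▸ hx) hhT
      · exact h2
    exact (hφ.zsum_dep (hTI.trans (hIHp.trans hHpE)) hTne hTsum).not_indep
      (hIind.subset hTI)
  -- (γ) any two elements outside Hp are congruent modulo I
  have hgamma : ∀ c ∈ M.E \ Hp, ∀ c' ∈ M.E \ Hp, c ≠ c' →
      ∃ T : Finset α, c ∈ T ∧ c' ∈ T ∧ ↑T ⊆ insert c' (insert c I) ∧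
        ∑ x ∈ T, φ x = 0 := by
    intro c hc c' hc' hne
    have hsubE : insert c Hp ⊆ M.E := insert_subset hc.1 hHpE
    have h1 : Hp ⊆ M.closure (insert c Hp) :=
      (subset_insert c Hp).trans (M.subset_closure _ hsubE)
    have h2 : c ∈ M.closure (insert c Hp) := M.subset_closure _ hsubE (mem_insert c Hp)
    have hF : M.closure (insert c Hp) = M.E := by
      refine hH.2.2 _ (flat_closure M _) (ssubset_of_subset_of_ne h1 ?_)
      intro heq
      exact hc.2 (heq ▸ h2)
    have e1 : M.closure (insert c I) = M.closure (insert c Hp) := by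
      rw [← Matroid.closure_insert_closure_eq_closure_insert, hclI]
    have hc'mem : c' ∈ M.closure (insert c I) := by rw [e1, hF]; exact hc'.1
    have hicind := hins c hc
    have hc'notmem : c' ∉ insert c I := by
      simp only [mem_insert_iff, not_or]
      exact ⟨hne.symm, fun h => hc'.2 (hIHp h)⟩
    have hdep : M.Dep (insert c' (insert c I)) :=
      hicind.insert_dep_iff.2 ⟨hc'mem, hc'notmem⟩
    obtain ⟨T, hTsub, hTne, hTsum⟩ := hφ.dep_zsum hdep
    have hc'T : c' ∈ (T : Set α) := by
      by_contra hc'T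
      have hTsub' : (T : Set α) ⊆ insert c I := by
        intro x hx
        rcases hTsub hx with h1' | h2'
        · exact absurd (h1' ▸ hx) hc'T
        · exact h2'
      exact (hφ.zsum_dep (hTsub'.trans hicind.subset_ground) hTne hTsum).not_indep
        (hicind.subset hTsub')
    have hcT : c ∈ (T : Set α) := by
      by_contra hcT
      have hTsub' : (T : Set α) ⊆ insert c' I := by
        intro x hx
        rcases hTsub hx with h1' | h2'
        · exact h1' ▸ mem_insert _ _
        · rcases h2' with h3 | h4
          · exact absurd (h3 ▸ hx) hcT
          · exact mem_insert_of_mem _ h4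
      have hic'ind := hins c' hc'
      exact (hφ.zsum_dep (hTsub'.trans hic'ind.subset_ground) hTne hTsum).not_indep
        (hic'ind.subset hTsub')
    exact ⟨T, hcT, hc'T, hTsub, hTsum⟩
  -- Claim B : no zero-sum set inside Hp ∪ {c} through c outside Hp
  have claimB : ∀ m (S : Finset α) (c : α), c ∈ M.E → c ∉ Hp →
      (S.filter (fun x => x ∈ Hp ∧ x ∉ I)).card = m → ↑S ⊆ insert c Hp → c ∈ S →
      (∑ x ∈ S, φ x = 0) → False := by
    intro m
    induction m with
    | zero =>
      intro S c hcE hcHp hfil hSsub hcS hsum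
      have hSsub' : (S : Set α) ⊆ insert c I := by
        intro x hx
        rcases hSsub hx with h1 | h2
        · exact h1 ▸ mem_insert _ _
        · by_cases hxI : x ∈ I
          · exact mem_insert_of_mem _ hxI
          · exfalso
            have : x ∈ S.filter (fun x => x ∈ Hp ∧ x ∉ I) :=
              Finset.mem_filter.2 ⟨Finset.mem_coe.1 hx, h2, hxI⟩
            rw [Finset.card_eq_zero.1 hfil] at this
            simp at this
      have hicind := hins c ⟨hcE, hcHp⟩
      exact (hφ.zsum_dep (hSsub'.trans hicind.subset_ground) ⟨c, hcS⟩ hsum).not_indep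
        (hicind.subset hSsub')
    | succ m ih =>
      intro S c hcE hcHp hfil hSsub hcS hsum
      have hfilne : (S.filter (fun x => x ∈ Hp ∧ x ∉ I)).Nonempty := by
        rw [← Finset.card_pos, hfil]; omega
      obtain ⟨h, hhfil⟩ := hfilne
      have hhS := (Finset.mem_filter.1 hhfil).1
      have hhHp := (Finset.mem_filter.1 hhfil).2.1
      have hhI := (Finset.mem_filter.1 hhfil).2.2
      obtain ⟨T, hhT, hTsub, hTsum⟩ := hbeta h hhHp hhI
      have hTHp : (T : Set α) ⊆ Hp := by
        intro x hx
        rcases hTsub hx with h1 | h2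
        · exact h1 ▸ hhHp
        · exact hIHp h2
      set S' := symmDiff S T with hS'
      have hsum' : ∑ x ∈ S', φ x = 0 := by
        rw [hS', zsum_symmDiff, hsum, hTsum, add_zero]
      have hcT : c ∉ T := fun h' => hcHp (hTHp (Finset.mem_coe.2 h'))
      have hcS' : c ∈ S' := Finset.mem_symmDiff.2 (Or.inl ⟨hcS, hcT⟩)
      have hS'sub : (S' : Set α) ⊆ insert c Hp := by
        intro x hx
        rcases Finset.mem_symmDiff.1 (Finset.mem_coe.1 hx) with ⟨h1, _⟩ | ⟨h1, _⟩
        · exact hSsub (Finset.mem_coe.2 h1)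
        · exact mem_insert_of_mem _ (hTHp (Finset.mem_coe.2 h1))
      have hfil' : (S'.filter (fun x => x ∈ Hp ∧ x ∉ I)).card = m := by
        have hfeq : S'.filter (fun x => x ∈ Hp ∧ x ∉ I)
            = (S.filter (fun x => x ∈ Hp ∧ x ∉ I)).erase h := by
          ext x
          simp only [Finset.mem_filter, Finset.mem_erase]
          constructor
          · rintro ⟨hxS', hxHp, hxI⟩
            have hxT : x ∈ T → x = h := by
              intro hxT
              rcases hTsub (Finset.mem_coe.2 hxT) with h1 | h2
              · exact h1
              · exact absurd h2 hxI
            rcases Finset.mem_symmDiff.1 hxS' with ⟨h1, h2⟩ | ⟨h1, h2⟩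
            · exact ⟨fun heq => h2 (heq ▸ hhT), ⟨h1, hxHp, hxI⟩⟩
            · exact absurd h1 (fun h' => h2 (hxT h' ▸ hhS))
          · rintro ⟨hxh, hxS, hxHp, hxI⟩
            refine ⟨Finset.mem_symmDiff.2 (Or.inl ⟨hxS, ?_⟩), hxHp, hxI⟩
            intro hxT
            rcases hTsub (Finset.mem_coe.2 hxT) with h1 | h2
            · exact hxh h1
            · exact hxI h2
        rw [hfeq, Finset.card_erase_of_mem hhfil, hfil]
        omega
      exact ih S' c hcE hcHp hfil' hS'sub hcS' hsum'
  -- Claim A : every zero-sum set meets the complement of Hp evenly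
  have claimA : ∀ n, ∀ (S : Finset α), (S.filter (fun x => x ∉ Hp)).card = n →
      ↑S ⊆ M.E → (∑ x ∈ S, φ x = 0) → Even n := by
    intro n
    induction n using Nat.strong_induction_on with
    | _ n ih =>
      intro S hn hSE hsum
      match n, hn with
      | 0, _ => exact Even.zero
      | 1, hn => {
          obtain ⟨c, hc⟩ := Finset.card_eq_one.1 hn
          have hcfil : c ∈ S.filter (fun x => x ∉ Hp) := hc ▸ Finset.mem_singleton_self c
          obtain ⟨hcS, hcHp⟩ := Finset.mem_filter.1 hcfil
          have hSsub : (S : Set α) ⊆ insert c Hp := by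
            intro x hx
            by_cases hxHp : x ∈ Hp
            · exact mem_insert_of_mem _ hxHp
            · have : x ∈ S.filter (fun x => x ∉ Hp) :=
                Finset.mem_filter.2 ⟨Finset.mem_coe.1 hx, hxHp⟩
              rw [hc, Finset.mem_singleton] at this
              exact this ▸ mem_insert _ _
          exact absurd (claimB _ S c (hSE (Finset.mem_coe.2 hcS)) hcHp rfl hSsub hcS hsum) id }
      | (n+2), hn => {
          have h2 : 1 < (S.filter (fun x => x ∉ Hp)).card := by omega
          obtain ⟨c, hcfil, c', hc'fil, hne⟩ := Finset.one_lt_card.1 h2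
          obtain ⟨hcS, hcHp⟩ := Finset.mem_filter.1 hcfil
          obtain ⟨hc'S, hc'Hp⟩ := Finset.mem_filter.1 hc'fil
          obtain ⟨T, hcT, hc'T, hTsub, hTsum⟩ :=
            hgamma c ⟨hSE (Finset.mem_coe.2 hcS), hcHp⟩ c'
              ⟨hSE (Finset.mem_coe.2 hc'S), hc'Hp⟩ hne
          set S' := symmDiff S T with hS'
          have hsum' : ∑ x ∈ S', φ x = 0 := by
            rw [hS', zsum_symmDiff, hsum, hTsum, add_zero]
          have hS'E : (S' : Set α) ⊆ M.E := by
            intro x hx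
            rcases Finset.mem_symmDiff.1 (Finset.mem_coe.1 hx) with ⟨h1, _⟩ | ⟨h1, _⟩
            · exact hSE (Finset.mem_coe.2 h1)
            · rcases hTsub (Finset.mem_coe.2 h1) with h3 | h3
              · exact h3 ▸ hSE (Finset.mem_coe.2 hc'S)
              · rcases h3 with h4 | h4
                · exact h4 ▸ hSE (Finset.mem_coe.2 hcS)
                · exact hIHp.trans hHpE h4
          have hTout : ∀ x ∈ T, x ∉ Hp → x = c ∨ x = c' := by
            intro x hxT hxHp
            rcases hTsub (Finset.mem_coe.2 hxT) with h1 | h2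
            · exact Or.inr h1
            · rcases h2 with h3 | h4
              · exact Or.inl h3
              · exact absurd (hIHp h4) hxHp
          have hfeq : S'.filter (fun x => x ∉ Hp)
              = ((S.filter (fun x => x ∉ Hp)).erase c).erase c' := by
            ext x
            simp only [Finset.mem_filter, Finset.mem_erase]
            constructor
            · rintro ⟨hxS', hxHp⟩
              rcases Finset.mem_symmDiff.1 hxS' with ⟨h1, h2⟩ | ⟨h1, h2⟩
              · exact ⟨fun heq => h2 (heq ▸ hc'T), fun heq => h2 (heq ▸ hcT), h1, hxHp⟩
              · rcases hTout x h1 hxHp with rfl | rfl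
                · exact absurd hcS h2
                · exact absurd hc'S h2
            · rintro ⟨hxc', hxc, hxS, hxHp⟩
              refine ⟨Finset.mem_symmDiff.2 (Or.inl ⟨hxS, ?_⟩), hxHp⟩
              intro hxT
              rcases hTout x hxT hxHp with rfl | rfl
              · exact hxc rfl
              · exact hxc' rfl
          have hc'mem : c' ∈ (S.filter (fun x => x ∉ Hp)).erase c :=
            Finset.mem_erase.2 ⟨hne.symm, hc'fil⟩
          have hcard' : (S'.filter (fun x => x ∉ Hp)).card = n := by
            rw [hfeq, Finset.card_erase_of_mem hc'mem, Finset.card_erase_of_mem hcfil, hn]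
            omega
          obtain ⟨r, hr⟩ := ih n (by omega) S' hcard' hS'E hsum'
          exact ⟨r + 1, by omega⟩ }
  obtain ⟨S, hSeq, hSsum⟩ := hφ.circuit_finset hC
  have hCE : C ⊆ M.E := hC.1.subset_ground
  have hdiffeq : C \ Hp = ↑(S.filter (fun x => x ∉ Hp)) := by
    rw [← hSeq]
    ext x
    simp [Finset.coe_filter]
  rw [hdiffeq, ncard_coe_finset]
  exact claimA _ S rfl (hSeq ▸ hCE) hSsum


lemma IsRelaxation.indep_iff' {N M' : Matroid α} {X : Set α} (h : IsRelaxation N X M')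
    {I : Set α} : M'.Indep I ↔ (N.Indep I ∨ I ⊆ X) := by
  rw [Matroid.indep_iff]
  constructor
  · rintro ⟨B, hB, hIB⟩
    rcases (h.2 B).1 hB with hNB | rfl
    · exact Or.inl (Matroid.indep_iff.2 ⟨B, hNB, hIB⟩)
    · exact Or.inr hIB
  · rintro (hNI | hIX)
    · obtain ⟨B, hB, hIB⟩ := hNI.exists_isBase_superset
      exact ⟨B, (h.2 B).2 (Or.inl hB), hIB⟩
    · exact ⟨X, (h.2 X).2 (Or.inr rfl), hIX⟩

lemma del_ground (M : Matroid α) (D : Set α) : (del M D).E = M.E \ D := rfl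

lemma del_indep_iff {M : Matroid α} {D I : Set α} :
    (del M D).Indep I ↔ M.Indep I ∧ I ⊆ M.E \ D := Matroid.restrict_indep_iff

lemma con_ground (M : Matroid α) (C : Set α) : (con M C).E = M.E \ C := rfl

lemma con_indep_iff {M : Matroid α} {e : α} (heE : e ∈ M.E) (hnl : M.Indep {e}) {I : Set α} :
    (con M {e}).Indep I ↔ e ∉ I ∧ I ⊆ M.E ∧ M.Indep (insert e I) := by
  have hEe : M.E \ {e} ⊆ M✶.E := by rw [Matroid.dual_ground]; exact diff_subset
  obtain ⟨B₀, hB₀, heB₀⟩ : ∃ B₀, M✶.IsBase B₀ ∧ e ∉ B₀ := by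
    obtain ⟨B, hB, heB⟩ := hnl.exists_isBase_superset
    exact ⟨M.E \ B, hB.compl_isBase_dual, fun h => h.2 (heB rfl)⟩
  have hbase : ∀ B, ((M✶).restrict (M.E \ {e})).IsBase B ↔ (M✶.IsBase B ∧ e ∉ B) := by
    intro B
    rw [Matroid.isBase_restrict_iff hEe]
    constructor
    · intro hB
      have hBsub : B ⊆ M.E \ {e} := hB.subset
      obtain ⟨Bs, hBs, hBBs⟩ := hB.indep.exists_isBase_superset
      by_cases heBs : e ∈ Bs
      · obtain ⟨y, hy, hBss⟩ := hBs.exchange hB₀ ⟨heBs, heB₀⟩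
        have hyne : y ≠ e := fun h => heB₀ (h ▸ hy.1)
        have heBss : e ∉ insert y (Bs \ {e}) := by
          intro h
          rcases mem_insert_iff.1 h with h1 | h2
          · exact hyne h1.symm
          · exact h2.2 rfl
        have hsub2 : B ⊆ insert y (Bs \ {e}) := fun x hx =>
          mem_insert_of_mem _ ⟨hBBs hx, fun hxe => (hBsub hx).2 hxe⟩
        have hsub3 : insert y (Bs \ {e}) ⊆ M.E \ {e} := by
          intro x hx
          exact ⟨hBss.subset_ground hx, fun hxe => heBss (hxe ▸ hx)⟩
        have hBeq := hB.eq_of_subset_indep hBss.indep hsub2 hsub3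
        rw [hBeq]
        exact ⟨hBss, heBss⟩
      · have hBsSub : Bs ⊆ M.E \ {e} := fun x hx =>
          ⟨hBs.subset_ground hx, fun hxe => heBs (hxe ▸ hx)⟩
        have hBeq := hB.eq_of_subset_indep hBs.indep hBBs hBsSub
        rw [hBeq]
        exact ⟨hBs, fun h => heBs h⟩
    · rintro ⟨hB, heB⟩
      refine hB.indep.isBasis_of_subset_of_subset_closure ?_ ?_
      · exact fun x hx => ⟨hB.subset_ground hx, fun hxe => heB (hxe ▸ hx)⟩
      · rw [hB.closure_eq]; exact diff_subset
  constructor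
  · intro hI
    have hI' : (((M✶).restrict (M.E \ {e}))✶).Indep I := hI
    obtain ⟨hIsub, B, hBr, hdisj⟩ := Matroid.dual_indep_iff_exists'.1 hI'
    rw [Matroid.restrict_ground_eq] at hIsub
    obtain ⟨hB, heB⟩ := (hbase B).1 hBr
    have hBM : M.IsBase (M.E \ B) := hB.compl_isBase_of_dual
    have hsub : insert e I ⊆ M.E \ B := by
      refine insert_subset ⟨heE, heB⟩ ?_
      intro x hx
      exact ⟨(hIsub hx).1, fun hxB => (disjoint_left.1 hdisj hx) hxB⟩
    exact ⟨fun h => (hIsub h).2 rfl, fun x hx => (hIsub hx).1, hBM.indep.subset hsub⟩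
  · rintro ⟨heI, hIE, hind⟩
    obtain ⟨Bm, hBm, hsub⟩ := hind.exists_isBase_superset
    have hIBm : I ⊆ Bm := (subset_insert e I).trans hsub
    show (((M✶).restrict (M.E \ {e}))✶).Indep I
    refine Matroid.dual_indep_iff_exists'.2 ⟨?_, M.E \ Bm, ?_, ?_⟩
    · rw [Matroid.restrict_ground_eq]
      exact fun x hx => ⟨hIE hx, fun hxe => heI (hxe ▸ hx)⟩
    · exact (hbase _).2 ⟨hBm.compl_isBase_dual, fun h => h.2 (hsub (mem_insert e I))⟩
    · exact Set.disjoint_of_subset_left hIBm disjoint_sdiff_right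

/-- The abstract setup after relaxing both circuit-hyperplanes. -/
structure Good (N M : Matroid α) (X Y : Set α) : Prop where
  conn : Connected N
  bin : IsBinary N
  chX : CircuitHyperplane N X
  chY : CircuitHyperplane N Y
  disj : Disjoint X Y
  cover : X ∪ Y = N.E
  ground : M.E = N.E
  indep : ∀ I, M.Indep I ↔ (N.Indep I ∨ I ⊆ X ∨ I ⊆ Y)

variable {N M : Matroid α} {X Y : Set α}

lemma Good.symm (h : Good N M X Y) : Good N M Y X :=
  ⟨h.conn, h.bin, h.chY, h.chX, h.disj.symm, by rw [union_comm]; exact h.cover, h.ground,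
    fun I => by rw [h.indep I]; tauto⟩

lemma Good.XE (h : Good N M X Y) : X ⊆ N.E := h.chX.1.1.subset_ground
lemma Good.YE (h : Good N M X Y) : Y ⊆ N.E := h.chY.1.1.subset_ground
lemma Good.Xne (h : Good N M X Y) : X.Nonempty := h.chX.1.1.nonempty
lemma Good.Yne (h : Good N M X Y) : Y.Nonempty := h.chY.1.1.nonempty

lemma Good.Xfin (h : Good N M X Y) : X.Finite := by
  obtain ⟨ι', φ, hφ⟩ := h.bin
  exact circuit_finite hφ h.chX.1

lemma Good.Efin (h : Good N M X Y) : N.E.Finite := by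
  rw [← h.cover]
  exact h.Xfin.union h.symm.Xfin

/-- everything in the ground set outside X is in Y -/
lemma Good.mem_Y (h : Good N M X Y) {z : α} (hz : z ∈ N.E) (hzX : z ∉ X) : z ∈ Y := by
  rw [← h.cover] at hz
  exact hz.resolve_left hzX

lemma Good.even_inter_Y (h : Good N M X Y) {C : Set α} (hC : Circuit N C) :
    Even ((C ∩ Y).ncard) := by
  obtain ⟨ι', φ, hφ⟩ := h.bin
  have hφ' : Rep N φ := hφ
  have heq : C ∩ Y = C \ X := by
    ext z
    constructor
    · rintro ⟨h1, h2⟩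
      exact ⟨h1, fun h3 => (disjoint_left.1 h.disj h3) h2⟩
    · rintro ⟨h1, h2⟩
      exact ⟨h1, h.mem_Y (hC.1.subset_ground h1) h2⟩
  rw [heq]
  exact hφ'.even_circuit_hyperplane hC h.chX.2

/-- inserting one element of `Y` into an independent subset of `X` stays independent in `N` -/
lemma Good.insert_indep (h : Good N M X Y) {x h' : α} (hx : x ∈ Y) (hh : h' ∈ X) :
    N.Indep (insert x (X \ {h'})) := by
  by_contra hdep
  have hsubE : insert x (X \ {h'}) ⊆ N.E :=
    insert_subset (h.YE hx) (diff_subset.trans h.XE)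
  have hd : N.Dep (insert x (X \ {h'})) := ⟨hdep, hsubE⟩
  obtain ⟨C₀, hC₀sub, hC₀⟩ := exists_circuit_of_dep_finite hd
    ((h.Xfin.diff (t := {h'})).insert x)
  have hC₀Y : C₀ ∩ Y ⊆ {x} := by
    rintro z ⟨hz1, hz2⟩
    rcases hC₀sub hz1 with h1 | h2
    · exact h1
    · exact absurd h2.1 (fun h3 => (disjoint_left.1 h.disj h3) hz2)
  have heven := h.even_inter_Y hC₀
  rcases subset_singleton_iff_eq.1 hC₀Y with hemp | hsing
  · have hC₀X : C₀ ⊆ X \ {h'} := by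
      intro z hz
      rcases hC₀sub hz with h1 | h2
      · exfalso
        have : z ∈ C₀ ∩ Y := ⟨hz, h1 ▸ hx⟩
        rw [hemp] at this
        exact this
      · exact h2
    exact hC₀.1.not_indep ((h.chX.1.2 h' hh).subset hC₀X)
  · rw [hsing, ncard_singleton] at heven
    simp at heven

lemma Good.baseX (h : Good N M X Y) : M.IsBase X := by
  rw [Matroid.isBase_iff_maximal_indep]
  constructor
  · exact (h.indep X).2 (Or.inr (Or.inl Subset.rfl))
  · intro K hK hXK
    rcases (h.indep K).1 hK with h1 | h2 | h3
    · exact absurd (h1.subset hXK) h.chX.1.1.not_indep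
    · exact h2
    · exfalso
      obtain ⟨x, hx⟩ := h.Xne
      exact (disjoint_left.1 h.disj hx) (h3 (hXK hx))

lemma Good.indep_encard_le (h : Good N M X Y) {K : Set α} (hK : M.Indep K) :
    K.encard ≤ X.encard := by
  obtain ⟨B, hB, hKB⟩ := hK.exists_isBase_superset
  calc K.encard ≤ B.encard := encard_le_encard hKB
    _ = X.encard := hB.encard_eq_encard_of_isBase h.baseX

/-- A circuit of `N` not contained in `X` nor in `Y` exists. -/
lemma Good.exists_cross_circuit (h : Good N M X Y) :
    ∃ C₁, Circuit N C₁ ∧ ¬C₁ ⊆ X ∧ ¬C₁ ⊆ Y := by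
  by_contra hno
  push_neg at hno
  apply h.conn
  refine ⟨X, ⟨h.XE, ?_⟩, h.Xne, ?_⟩
  · intro C hC
    by_cases h1 : C ⊆ X
    · exact Or.inl h1
    · have h1 : C ⊆ Y := hno C hC h1
      right
      intro z hz
      exact ⟨h.YE (h1 hz), fun hzX => (disjoint_left.1 h.disj hzX) (h1 hz)⟩
  · obtain ⟨y, hy⟩ := h.Yne
    exact ⟨y, h.YE hy, fun hyX => (disjoint_left.1 h.disj hyX) hy⟩

lemma Good.mem_X (h : Good N M X Y) {z : α} (hz : z ∈ N.E) (hzY : z ∉ Y) : z ∈ X :=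
  h.symm.mem_Y hz hzY

lemma Good.exists_circuit_avoiding (h : Good N M X Y) {e : α} (he : e ∈ Y) :
    ∃ C g, Circuit N C ∧ e ∉ C ∧ g ∈ C ∧ g ∈ X ∧ ¬C ⊆ X ∧ ¬C ⊆ Y := by
  classical
  obtain ⟨C₁, hC₁, hC₁X, hC₁Y⟩ := h.exists_cross_circuit
  obtain ⟨g, hgC₁, hgX⟩ : ∃ g, g ∈ C₁ ∧ g ∈ X := by
    obtain ⟨z, hz1, hz2⟩ := not_subset.1 hC₁Y
    exact ⟨z, hz1, h.mem_X (hC₁.1.subset_ground hz1) hz2⟩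
  by_cases heC₁ : e ∈ C₁
  · obtain ⟨ι', φ, hφ0⟩ := h.bin
    have hφ : Rep N φ := hφ0
    obtain ⟨SY, hSYeq, hSYsum⟩ := hφ.circuit_finset h.chY.1
    obtain ⟨SC, hSCeq, hSCsum⟩ := hφ.circuit_finset hC₁
    set D := symmDiff SY SC with hD
    have hDsum : ∑ x ∈ D, φ x = 0 := by rw [hD, zsum_symmDiff, hSYsum, hSCsum, add_zero]
    have hSYmem : ∀ z, z ∈ SY ↔ z ∈ Y := by
      intro z; rw [← hSYeq]; exact Iff.rfl
    have hSCmem : ∀ z, z ∈ SC ↔ z ∈ C₁ := by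
      intro z; rw [← hSCeq]; exact Iff.rfl
    have hDE : (D : Set α) ⊆ N.E := by
      intro z hz
      rcases Finset.mem_symmDiff.1 (Finset.mem_coe.1 hz) with ⟨h1, _⟩ | ⟨h1, _⟩
      · exact h.YE ((hSYmem z).1 h1)
      · exact hC₁.1.subset_ground ((hSCmem z).1 h1)
    have hgD : g ∈ D := Finset.mem_symmDiff.2 (Or.inr ⟨(hSCmem g).2 hgC₁,
        fun h' => (disjoint_left.1 h.disj hgX) ((hSYmem g).1 h')⟩)
    obtain ⟨C, hC, hCsub, hgC⟩ := hφ.exists_circuit_zsum_mem D.card D le_rfl hDE hDsum g hgD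
    have heD : e ∉ (D : Set α) := by
      intro hz
      rcases Finset.mem_symmDiff.1 (Finset.mem_coe.1 hz) with ⟨_, h2⟩ | ⟨_, h2⟩
      · exact h2 ((hSCmem e).2 heC₁)
      · exact h2 ((hSYmem e).2 he)
    have heC : e ∉ C := fun h' => heD (hCsub h')
    have hCX : ¬ C ⊆ X := by
      intro hsub
      have hCC₁ : C ⊆ C₁ := by
        intro z hz
        rcases Finset.mem_symmDiff.1 (Finset.mem_coe.1 (hCsub hz)) with ⟨h1, _⟩ | ⟨h1, _⟩
        · exact absurd ((hSYmem z).1 h1) (fun h' => (disjoint_left.1 h.disj (hsub hz)) h')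
        · exact (hSCmem z).1 h1
      have hne : C ≠ C₁ := fun hEq => heC (hEq.symm ▸ heC₁)
      obtain ⟨z, hzC₁, hzC⟩ : ∃ z, z ∈ C₁ ∧ z ∉ C := by
        by_contra hno
        push_neg at hno
        exact hne (Subset.antisymm hCC₁ hno)
      exact hC.1.not_indep ((hC₁.2 z hzC₁).subset
        (fun w hw => ⟨hCC₁ hw, fun h' => hzC (h' ▸ hw)⟩))
    have hCY : ¬ C ⊆ Y := fun hsub => (disjoint_left.1 h.disj hgX) (hsub hgC)
    exact ⟨C, g, hC, heC, hgC, hgX, hCX, hCY⟩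
  · exact ⟨C₁, g, hC₁, heC₁, hgC₁, hgX, hC₁X, hC₁Y⟩

lemma Good.exists_circuit_through (h : Good N M X Y) {e : α} (he : e ∈ Y) :
    ∃ C, Circuit N C ∧ e ∈ C ∧ ¬C ⊆ Y := by
  classical
  obtain ⟨C₁, hC₁, hC₁X, hC₁Y⟩ := h.exists_cross_circuit
  by_cases heC₁ : e ∈ C₁
  · exact ⟨C₁, hC₁, heC₁, hC₁Y⟩
  obtain ⟨y₁, hy₁C, hy₁Y⟩ : ∃ z, z ∈ C₁ ∧ z ∈ Y := by
    obtain ⟨z, hz1, hz2⟩ := not_subset.1 hC₁X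
    exact ⟨z, hz1, h.mem_Y (hC₁.1.subset_ground hz1) hz2⟩
  obtain ⟨ι', φ, hφ0⟩ := h.bin
  have hφ : Rep N φ := hφ0
  obtain ⟨SY, hSYeq, hSYsum⟩ := hφ.circuit_finset h.chY.1
  obtain ⟨SC, hSCeq, hSCsum⟩ := hφ.circuit_finset hC₁
  set D := symmDiff SY SC with hD
  have hDsum : ∑ x ∈ D, φ x = 0 := by rw [hD, zsum_symmDiff, hSYsum, hSCsum, add_zero]
  have hSYmem : ∀ z, z ∈ SY ↔ z ∈ Y := by
    intro z; rw [← hSYeq]; exact Iff.rfl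
  have hSCmem : ∀ z, z ∈ SC ↔ z ∈ C₁ := by
    intro z; rw [← hSCeq]; exact Iff.rfl
  have hDE : (D : Set α) ⊆ N.E := by
    intro z hz
    rcases Finset.mem_symmDiff.1 (Finset.mem_coe.1 hz) with ⟨h1, _⟩ | ⟨h1, _⟩
    · exact h.YE ((hSYmem z).1 h1)
    · exact hC₁.1.subset_ground ((hSCmem z).1 h1)
  have heD : e ∈ D := Finset.mem_symmDiff.2 (Or.inl ⟨(hSYmem e).2 he,
      fun h' => heC₁ ((hSCmem e).1 h')⟩)
  obtain ⟨C, hC, hCsub, heC⟩ := hφ.exists_circuit_zsum_mem D.card D le_rfl hDE hDsum e heD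
  have hCY : ¬ C ⊆ Y := by
    intro hsub
    have hCYy : C ⊆ Y \ {y₁} := by
      intro z hz
      refine ⟨hsub hz, ?_⟩
      intro hzy
      have hzy' : z = y₁ := hzy
      rcases Finset.mem_symmDiff.1 (Finset.mem_coe.1 (hCsub hz)) with ⟨_, h2⟩ | ⟨_, h2⟩
      · exact h2 ((hSCmem z).2 (by rw [hzy']; exact hy₁C))
      · exact h2 ((hSYmem z).2 (hsub hz))
    exact hC.1.not_indep ((h.chY.1.2 y₁ hy₁Y).subset hCYy)
  exact ⟨C, hC, heC, hCY⟩

lemma Good.del_nonbinary (h : Good N M X Y) {e : α} (he : e ∈ Y) :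
    ¬ IsBinary (del M {e}) := by
  classical
  intro hbinMd
  obtain ⟨ι', ψ, hψ0⟩ := hbinMd
  have hψ : Rep (del M {e}) ψ := hψ0
  obtain ⟨C, g, hC, heC, hgC, hgX, hCX, hCY⟩ := h.exists_circuit_avoiding he
  set Md := del M {e} with hMd
  have hMdE : Md.E = N.E \ {e} := by rw [hMd, del_ground, h.ground]
  have hCE : C ⊆ N.E := hC.1.subset_ground
  have hgne : g ≠ e := fun h' => (disjoint_left.1 h.disj hgX) (h' ▸ he)
  have heX : e ∉ X := fun h' => (disjoint_left.1 h.disj h') he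
  have hMdindep : ∀ I, Md.Indep I ↔ (M.Indep I ∧ I ⊆ N.E \ {e}) := by
    intro I; rw [hMd, del_indep_iff, h.ground]
  have hXgE : X \ {g} ⊆ N.E \ {e} := fun z hz =>
    ⟨h.XE hz.1, fun h' => heX (by rw [← h'] at he; exact absurd hz.1 (fun hh => (disjoint_left.1 h.disj hh) he))⟩
  -- C is a circuit of Md
  have hCMd : Circuit Md C := by
    constructor
    · rw [Matroid.dep_iff, hMdindep, hMdE]
      have hsub : C ⊆ N.E \ {e} := fun z hz => ⟨hCE hz, fun h' => heC (h' ▸ hz)⟩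
      refine ⟨fun hcon => ?_, hsub⟩
      rcases (h.indep C).1 hcon.1 with h1 | h2 | h3
      · exact hC.1.not_indep h1
      · exact hCX h2
      · exact hCY h3
    · intro f hf
      rw [hMdindep]
      exact ⟨(h.indep _).2 (Or.inl (hC.2 f hf)),
        fun z hz => ⟨hCE hz.1, fun h' => heC (h' ▸ hz.1)⟩⟩
  -- X \ {g} is Md-independent, and one-element extensions too
  have hXdind : Md.Indep (X \ {g}) := by
    rw [hMdindep]
    exact ⟨(h.indep _).2 (Or.inr (Or.inl diff_subset)), hXgE⟩
  have hkey : ∀ f, f ∈ Md.E → f ∉ X \ {g} → Md.Indep (insert f (X \ {g})) := by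
    intro f hfE hfXg
    rw [hMdE] at hfE
    by_cases hfX : f ∈ X
    · have hfg : f = g := by
        by_contra hne
        exact hfXg ⟨hfX, hne⟩
      subst hfg
      have : insert f (X \ {f}) = X := by
        rw [insert_diff_singleton, insert_eq_of_mem hfX]
      rw [this, hMdindep]
      refine ⟨(h.indep X).2 (Or.inr (Or.inl Subset.rfl)), ?_⟩
      exact fun z hz => ⟨h.XE hz, fun h' => heX (h' ▸ hz)⟩
    · have hfY : f ∈ Y := h.mem_Y hfE.1 hfX
      rw [hMdindep]
      exact ⟨(h.indep _).2 (Or.inl (h.insert_indep hfY hgX)),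
        insert_subset ⟨hfE.1, hfE.2⟩ hXgE⟩
  have hXgMd : X \ {g} ⊆ Md.E := by rw [hMdE]; exact hXgE
  -- X \ {g} is closed in Md
  have hclosure : Md.closure (X \ {g}) = X \ {g} := by
    refine Subset.antisymm ?_ (Md.subset_closure _ hXgMd)
    intro f hfcl
    by_contra hfXg
    have hfE : f ∈ Md.E := Md.closure_subset_ground _ hfcl
    have hdep := ((hXdind.mem_closure_iff).1 hfcl).resolve_right hfXg
    exact hdep.not_indep (hkey f hfE hfXg)
  have hHp : Hyperplane Md (X \ {g}) := by
    refine ⟨hclosure ▸ flat_closure Md (X \ {g}), ?_, ?_⟩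
    · intro hEq
      have hgMd : g ∈ Md.E := by rw [hMdE]; exact ⟨h.XE hgX, fun h' => hgne h'⟩
      rw [← hEq] at hgMd
      exact hgMd.2 rfl
    · intro F hF hssub
      obtain ⟨f, hfF, hfXg⟩ := exists_of_ssubset hssub
      have hfE : f ∈ Md.E := hF.subset_ground hfF
      have hJind : Md.Indep (insert f (X \ {g})) := hkey f hfE hfXg
      have hJF : insert f (X \ {g}) ⊆ F := insert_subset hfF hssub.subset
      refine Subset.antisymm hF.subset_ground ?_
      intro z hz
      by_cases hzJ : z ∈ insert f (X \ {g})
      · exact hJF hzJ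
      · have hdep : Md.Dep (insert z (insert f (X \ {g}))) := by
          rw [Matroid.dep_iff]
          refine ⟨?_, insert_subset hz (hJind.subset_ground)⟩
          intro hind
          have hMind : M.Indep (insert z (insert f (X \ {g}))) := ((hMdindep _).1 hind).1
          have hcard : (insert z (insert f (X \ {g}))).encard = X.encard + 1 := by
            rw [encard_insert_of_notMem hzJ,
              encard_insert_of_notMem hfXg,
              encard_diff_singleton_add_one hgX]
          have hle := h.indep_encard_le hMind
          rw [hcard] at hle
          have hlt := ((ENat.add_one_le_iff h.Xfin.encard_lt_top.ne).1 hle)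
          exact lt_irrefl _ hlt
        have hzcl : z ∈ Md.closure (insert f (X \ {g})) :=
          (hJind.mem_closure_iff).2 (Or.inl hdep)
        have hsub2 : Md.closure (insert f (X \ {g})) ⊆ F := by
          rw [← hF.closure]
          exact Md.closure_subset_closure hJF
        exact hsub2 hzcl
  -- parity contradiction
  have heven := hψ.even_circuit_hyperplane hCMd hHp
  have hdiff : C \ (X \ {g}) = insert g (C ∩ Y) := by
    ext z
    constructor
    · rintro ⟨hzC, hz2⟩
      by_cases hzX : z ∈ X
      · left
        by_contra hne
        exact hz2 ⟨hzX, hne⟩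
      · exact Or.inr ⟨hzC, h.mem_Y (hCE hzC) hzX⟩
    · rintro (rfl | ⟨hz1, hz2⟩)
      · exact ⟨hgC, fun h' => h'.2 rfl⟩
      · exact ⟨hz1, fun h' => (disjoint_left.1 h.disj h'.1) hz2⟩
  rw [hdiff] at heven
  have hgCY : g ∉ C ∩ Y := fun h' => (disjoint_left.1 h.disj hgX) h'.2
  rw [ncard_insert_of_notMem hgCY ((h.Efin.subset hCE).subset inter_subset_left)] at heven
  obtain ⟨a, ha⟩ := heven
  obtain ⟨b, hb⟩ := h.even_inter_Y hC
  omega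

lemma Good.con_nonbinary (h : Good N M X Y) {e : α} (he : e ∈ Y) :
    ¬ IsBinary (con M {e}) := by
  classical
  intro hbinMc
  obtain ⟨ι', ψ, hψ0⟩ := hbinMc
  have hψ : Rep (con M {e}) ψ := hψ0
  obtain ⟨C, hC, heC, hCY⟩ := h.exists_circuit_through he
  set Mc := con M {e} with hMc
  have heE : e ∈ M.E := by rw [h.ground]; exact h.YE he
  have hnl : M.Indep {e} := (h.indep {e}).2 (Or.inr (Or.inr (singleton_subset_iff.2 he)))
  have hMcindep : ∀ I, Mc.Indep I ↔ (e ∉ I ∧ I ⊆ N.E ∧ M.Indep (insert e I)) := by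
    intro I; rw [hMc, con_indep_iff heE hnl, h.ground]
  have hMcE : Mc.E = N.E \ {e} := by rw [hMc, con_ground, h.ground]
  have hCE : C ⊆ N.E := hC.1.subset_ground
  have hCX : ¬ C ⊆ X := fun hsub => (disjoint_left.1 h.disj (hsub heC)) he
  -- pick y' ∈ C ∩ Y with y' ≠ e
  obtain ⟨y', hy'CY, hy'e⟩ : ∃ y', y' ∈ C ∩ Y ∧ y' ≠ e := by
    by_contra hno
    push_neg at hno
    have : C ∩ Y = {e} := by
      refine Subset.antisymm (fun z hz => hno z hz) (fun z hz => ?_)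
      rw [hz]; exact ⟨heC, he⟩
    obtain ⟨b, hb⟩ := h.even_inter_Y hC
    rw [this, ncard_singleton] at hb
    omega
  obtain ⟨hy'C, hy'Y⟩ := hy'CY
  set Hp : Set α := (Y \ {y'}) \ {e} with hHpdef
  have heHp : e ∉ Hp := fun h' => h'.2 rfl
  have hy'Hp : y' ∉ Hp := fun h' => h'.1.2 rfl
  have hHpE : Hp ⊆ N.E := fun z hz => h.YE hz.1.1
  have heYy' : e ∈ Y \ {y'} := ⟨he, fun h' => hy'e (by exact (mem_singleton_iff.1 h').symm ▸ rfl)⟩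
  have hYid : insert e (insert y' Hp) = Y := by
    rw [hHpdef, insert_comm, insert_diff_singleton, insert_eq_of_mem heYy',
      insert_diff_singleton]
    exact insert_eq_of_mem hy'Y
  have hinsHp : insert e Hp = Y \ {y'} := by
    rw [hHpdef, insert_diff_singleton, insert_eq_of_mem heYy']
  -- Hp is Mc-independent, as are the relevant one-element extensions
  have hHpind : Mc.Indep Hp := by
    rw [hMcindep]
    refine ⟨heHp, hHpE, ?_⟩
    rw [hinsHp]
    exact (h.indep _).2 (Or.inr (Or.inr diff_subset))
  have hkey : ∀ f, f ∈ Mc.E → f ∉ Hp → Mc.Indep (insert f Hp) := by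
    intro f hfE hfHp
    rw [hMcE] at hfE
    have hfe : f ≠ e := fun h' => hfE.2 h'
    rw [hMcindep]
    refine ⟨fun h' => (mem_insert_iff.1 h').elim (fun h'' => hfe h''.symm) heHp,
      insert_subset hfE.1 hHpE, ?_⟩
    have hid : insert e (insert f Hp) = insert f (Y \ {y'}) := by
      rw [insert_comm, hinsHp]
    rw [hid]
    by_cases hfY : f ∈ Y
    · have hfy' : f = y' := by
        by_contra hne
        exact hfHp ⟨⟨hfY, hne⟩, hfe⟩
      subst hfy'
      rw [insert_diff_singleton, insert_eq_of_mem hfY]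
      exact (h.indep Y).2 (Or.inr (Or.inr Subset.rfl))
    · have hfX : f ∈ X := h.mem_X hfE.1 hfY
      exact (h.indep _).2 (Or.inl (h.symm.insert_indep hfX hy'Y))
  have hHpMc : Hp ⊆ Mc.E := by
    rw [hMcE]
    exact fun z hz => ⟨hHpE hz, fun h' => heHp (h' ▸ hz)⟩
  have hclosure : Mc.closure Hp = Hp := by
    refine Subset.antisymm ?_ (Mc.subset_closure _ hHpMc)
    intro f hfcl
    by_contra hfHp
    have hfE : f ∈ Mc.E := Mc.closure_subset_ground _ hfcl
    have hdep := ((hHpind.mem_closure_iff).1 hfcl).resolve_right hfHp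
    exact hdep.not_indep (hkey f hfE hfHp)
  have hHp : Hyperplane Mc Hp := by
    refine ⟨hclosure ▸ flat_closure Mc Hp, ?_, ?_⟩
    · intro hEq
      have hy'Mc : y' ∈ Mc.E := by
        rw [hMcE]
        exact ⟨h.YE hy'Y, fun h' => hy'e h'⟩
      rw [← hEq] at hy'Mc
      exact hy'Hp hy'Mc
    · intro F hF hssub
      obtain ⟨f, hfF, hfHp⟩ := exists_of_ssubset hssub
      have hfE : f ∈ Mc.E := hF.subset_ground hfF
      have hJind : Mc.Indep (insert f Hp) := hkey f hfE hfHp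
      have hJF : insert f Hp ⊆ F := insert_subset hfF hssub.subset
      refine Subset.antisymm hF.subset_ground ?_
      intro z hz
      by_cases hzJ : z ∈ insert f Hp
      · exact hJF hzJ
      · have hdep : Mc.Dep (insert z (insert f Hp)) := by
          rw [Matroid.dep_iff]
          refine ⟨?_, insert_subset hz hJind.subset_ground⟩
          intro hind
          obtain ⟨hez, hzE, hMind⟩ := (hMcindep _).1 hind
          have hze : z ≠ e := fun h' => hez (h' ▸ mem_insert z _)
          have hfe : f ≠ e := fun h' => by
            rw [hMcE] at hfE
            exact hfE.2 h'
          have hYcard : Y.encard = Hp.encard + 1 + 1 := by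
            rw [← hYid, encard_insert_of_notMem, encard_insert_of_notMem hy'Hp]
            intro h'
            rcases mem_insert_iff.1 h' with h1 | h2
            · exact hy'e h1.symm
            · exact heHp h2
          have hKcard : (insert e (insert z (insert f Hp))).encard = Hp.encard + 1 + 1 + 1 := by
            rw [encard_insert_of_notMem, encard_insert_of_notMem hzJ,
              encard_insert_of_notMem hfHp]
            intro h'
            rcases mem_insert_iff.1 h' with h1 | h2
            · exact hze h1.symm
            · rcases mem_insert_iff.1 h2 with h3 | h4
              · exact hfe h3.symm
              · exact heHp h4
          have hle := h.symm.indep_encard_le hMind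
          rw [hKcard, hYcard] at hle
          have hfin : Hp.encard + 1 + 1 ≠ ⊤ := by
            have h1 : Hp.encard ≠ ⊤ := (h.Efin.subset hHpE).encard_lt_top.ne
            intro hcon
            rw [ENat.add_eq_top, ENat.add_eq_top] at hcon
            rcases hcon with (hcon | hcon)
            · rcases hcon with (hcon | hcon)
              · exact h1 hcon
              · exact (ENat.coe_ne_top 1).elim (by simpa using hcon)
            · exact (ENat.coe_ne_top 1).elim (by simpa using hcon)
          exact lt_irrefl _ ((ENat.add_one_le_iff hfin).1 hle)
        have hzcl : z ∈ Mc.closure (insert f Hp) :=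
          (hJind.mem_closure_iff).2 (Or.inl hdep)
        have hsub2 : Mc.closure (insert f Hp) ⊆ F := by
          rw [← hF.closure]
          exact Mc.closure_subset_closure hJF
        exact hsub2 hzcl
  -- C \ {e} is a circuit of Mc
  have hCid : insert e (C \ {e}) = C := by
    rw [insert_diff_singleton, insert_eq_of_mem heC]
  have hCMc : Circuit Mc (C \ {e}) := by
    constructor
    · rw [Matroid.dep_iff, hMcE]
      refine ⟨fun hcon => ?_, fun z hz => ⟨hCE hz.1, hz.2⟩⟩
      obtain ⟨-, -, hMind⟩ := (hMcindep _).1 hcon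
      rw [hCid] at hMind
      rcases (h.indep C).1 hMind with h1 | h2 | h3
      · exact hC.1.not_indep h1
      · exact hCX h2
      · exact hCY h3
    · intro f hf
      rw [hMcindep]
      refine ⟨fun h' => h'.1.2 rfl, fun z hz => hCE hz.1.1, ?_⟩
      have hfe : f ≠ e := fun h' => hf.2 (h' ▸ rfl)
      have hid : insert e ((C \ {e}) \ {f}) = C \ {f} := by
        rw [diff_diff_comm, insert_diff_singleton]
        exact insert_eq_of_mem ⟨heC, fun h' => hfe (mem_singleton_iff.1 h').symm⟩
      rw [hid]
      exact (h.indep _).2 (Or.inl (hC.2 f hf.1))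
  -- parity contradiction
  have heven := hψ.even_circuit_hyperplane hCMc hHp
  have hdiff : (C \ {e}) \ Hp = insert y' (C ∩ X) := by
    ext z
    constructor
    · rintro ⟨⟨hzC, hze⟩, hzHp⟩
      by_cases hzX : z ∈ X
      · exact Or.inr ⟨hzC, hzX⟩
      · left
        have hzY : z ∈ Y := h.mem_Y (hCE hzC) hzX
        by_contra hne
        exact hzHp ⟨⟨hzY, fun h' => hne (mem_singleton_iff.1 h')⟩,
          fun h' => hze (mem_singleton_iff.1 h')⟩
    · rintro (rfl | ⟨hz1, hz2⟩)
      · exact ⟨⟨hy'C, fun h' => hy'e (mem_singleton_iff.1 h')⟩, hy'Hp⟩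
      · refine ⟨⟨hz1, fun h' => (disjoint_left.1 h.disj hz2) ((mem_singleton_iff.1 h') ▸ he)⟩, ?_⟩
        exact fun h' => (disjoint_left.1 h.disj hz2) h'.1.1
  rw [hdiff] at heven
  have hy'CX : y' ∉ C ∩ X := fun h' => (disjoint_left.1 h.disj h'.2) hy'Y
  rw [ncard_insert_of_notMem hy'CX ((h.Efin.subset hCE).subset inter_subset_left)] at heven
  obtain ⟨a, ha⟩ := heven
  obtain ⟨b, hb⟩ := h.symm.even_inter_Y hC
  omega

end Machinery

/-- relaxing two disjoint complementary circuit-hyperplanes of a connected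
binary matroid yields a matroid all of whose single-element deletions and contractions
are non-binary. -/
theorem doubly_relaxed_nonbinary {α : Type u} (N M₁ M : Matroid α) (X Y : Set α)
    (hconn : Connected N) (hbin : IsBinary N)
    (hX : CircuitHyperplane N X) (hY : CircuitHyperplane N Y)
    (hdisj : Disjoint X Y) (hcover : X ∪ Y = N.E)
    (h₁ : IsRelaxation N X M₁) (hY₁ : CircuitHyperplane M₁ Y)
    (h₂ : IsRelaxation M₁ Y M) :
    ∀ e ∈ M.E, ¬ IsBinary (del M {e}) ∧ ¬ IsBinary (con M {e}) := by
  have hME : M.E = N.E := by rw [h₂.1, h₁.1]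
  have hbaseM : ∀ B, M.IsBase B ↔ (N.IsBase B ∨ B = X ∨ B = Y) := by
    intro B
    rw [h₂.2 B, h₁.2 B]
    tauto
  have hindep : ∀ I, M.Indep I ↔ (N.Indep I ∨ I ⊆ X ∨ I ⊆ Y) := by
    intro I
    rw [Matroid.indep_iff]
    constructor
    · rintro ⟨B, hB, hIB⟩
      rcases (hbaseM B).1 hB with h1 | rfl | rfl
      · exact Or.inl (Matroid.indep_iff.2 ⟨B, h1, hIB⟩)
      · exact Or.inr (Or.inl hIB)
      · exact Or.inr (Or.inr hIB)
    · rintro (h1 | h2 | h3)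
      · obtain ⟨B, hB, hIB⟩ := h1.exists_isBase_superset
        exact ⟨B, (hbaseM B).2 (Or.inl hB), hIB⟩
      · exact ⟨X, (hbaseM X).2 (Or.inr (Or.inl rfl)), h2⟩
      · exact ⟨Y, (hbaseM Y).2 (Or.inr (Or.inr rfl)), h3⟩
  have hG : Good N M X Y := ⟨hconn, hbin, hX, hY, hdisj, hcover, hME, hindep⟩
  intro e heE
  rw [hME, ← hcover] at heE
  rcases heE with heX | heY
  · exact ⟨hG.symm.del_nonbinary heX, hG.symm.con_nonbinary heX⟩
  · exact ⟨hG.del_nonbinary heY, hG.con_nonbinary heY⟩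

end NearlyBinary
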